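/- arXiv:1602.07607 — 2 statements merged into one kernel-verified Lean document; each statement's English description precedes it below -/
import Mathlib

section
/- Let r be an odd integer. If A is a colouring of the complete graph G with no monochromatic cycle of length r, and B is a colouring of the complete graph H (in disjoint colours) in which every monochromatic odd cycle has length strictly greater than r, then the product colouring A * B of G × H has no monochromatic cycle of length r. -/
/-!
A monochromatic `r`-cycle of `A * B` either has an `A`-colour, and then all its edges stay in one
copy of `K_m`, so that it is a monochromatic `r`-cycle of `A`; or it has a `B`-colour, and then
every edge changes the `K_n`-coordinate, so that its projection to `K_n` is a monochromatic closed
walk of odd length `r`. Such a walk contains a monochromatic odd cycle of length at most `r`.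
-/

namespace SimpleGraph.Walk

variable {V W : Type*} {G : SimpleGraph V} {H : SimpleGraph W}

theorem exists_odd_isCycle_of_odd_length {v : V} (q : G.Walk v v) (hq : Odd q.length) :
    ∃ (u : V) (c : G.Walk u u),
      c.IsCycle ∧ Odd c.length ∧ c.length ≤ q.length ∧ c.edges ⊆ q.edges := by
  obtain ⟨n, hn⟩ : ∃ n, q.length = n := ⟨_, rfl⟩
  induction n using Nat.strong_induction_on generalizing v q with
  | _ n ih =>
  cases q with
  | nil => simp at hq
  | @cons _ y _ h p =>
  by_cases hp : p.IsPath
  · by_cases he : s(v, y) ∈ p.edges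
    · -- a path from `y` to `v` through the edge `yv` is that edge, so `q` would have length 2
      have hsnd : v = p.snd := hp.eq_snd_of_mem_edges (Sym2.eq_swap ▸ he)
      have hpos : 0 < p.length := by simpa using List.length_pos_of_mem he
      have h1 : 1 = p.length :=
        hp.getVert_injOn (show 1 ≤ p.length from hpos) (show p.length ≤ p.length from le_rfl)
          (by simp [← hsnd])
      rw [length_cons, ← h1] at hq
      exact absurd hq (by decide)
    · exact ⟨v, cons h p, (cons_isCycle_iff p h).2 ⟨hp, he⟩, hq, le_rfl, List.Subset.refl _⟩
  · obtain ⟨x, c, ⟨ru, rv, rfl⟩, hc⟩ : ∃ (x : V) (c : G.Walk x x), c.IsSubwalk p ∧ ¬c.Nil := by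
      simpa [isPath_iff_isSubwalk_imp_nil] using hp
    -- cut the closed subwalk `c` out of `q`; one of the two pieces is odd
    let d : G.Walk v v := cons h (ru.append rv)
    have hc : 0 < c.length := not_nil_iff_lt_length.1 hc
    have hd : 0 < d.length := by simp [d]
    have hlen : d.length + c.length = n := by simp only [d, ← hn, length_cons, length_append]; omega
    have hdq : d.edges ⊆ (cons h ((ru.append c).append rv)).edges := by
      intro e; simp only [d, edges_cons, edges_append, List.mem_cons, List.mem_append]; tauto
    have hcq : c.edges ⊆ (cons h ((ru.append c).append rv)).edges := by
      intro e; simp only [edges_cons, edges_append, List.mem_cons, List.mem_append]; tauto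
    rw [hn, ← hlen] at hq
    rcases Nat.even_or_odd c.length with hc' | hc'
    · obtain ⟨u, c', hcyc, hodd, hle, hsub⟩ := ih _ (by omega) d ((Nat.odd_add.1 hq).2 hc') rfl
      exact ⟨u, c', hcyc, hodd, by omega, List.Subset.trans hsub hdq⟩
    · obtain ⟨u, c', hcyc, hodd, hle, hsub⟩ := ih _ (by omega) c hc' rfl
      exact ⟨u, c', hcyc, hodd, by omega, List.Subset.trans hsub hcq⟩

theorem exists_map_of_forall_adj (f : V → W) {u v : V} (p : G.Walk u v)
    (hp : ∀ x y, s(x, y) ∈ p.edges → H.Adj (f x) (f y)) :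
    ∃ q : H.Walk (f u) (f v),
      q.support = p.support.map f ∧ q.edges = p.edges.map (Sym2.map f) := by
  have hp' : ∀ e ∈ p.edges, e ∈ (H.comap f).edgeSet := by
    intro e he
    induction e using Sym2.ind with
    | _ x y => exact hp x y he
  exact ⟨(p.transfer _ hp').map ⟨f, id⟩, by rw [support_map, support_transfer]; rfl,
    by rw [edges_map, edges_transfer]; rfl⟩

theorem apply_eq_of_forall_mem_edges (f : V → W) {u v : V} (p : G.Walk u v)
    (hp : ∀ x y, s(x, y) ∈ p.edges → f x = f y) : ∀ z ∈ p.support, f z = f u := by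
  induction p with
  | nil => simp
  | @cons u y v h p ih =>
    have hy : f y = f u := (hp u y (by simp)).symm
    simp only [support_cons, List.mem_cons, forall_eq_or_imp, true_and]
    exact fun z hz ↦ (ih (fun x y hxy ↦ hp x y (by simp [hxy])) z hz).trans hy

theorem IsCycle.of_map_support_eq {f : G →g H} {u : V} {p : G.Walk u u}
    {q : H.Walk (f u) (f u)} (hq : q.IsCycle) (h : p.support.map f = q.support) : p.IsCycle :=
  IsCycle.of_map (f := f) (by rwa [ext_support (p := p.map f) (q := q) (by rw [support_map, h])])

end SimpleGraph.Walk

/-- `C` is the product colouring `A * B` of `K_V × K_W`, the colour sets being kept apart by the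
sum type `α ⊕ β`. -/
structure IsProductColouring {V W α β : Type*} (A : Sym2 V → α) (B : Sym2 W → β)
    (C : Sym2 (V × W) → α ⊕ β) : Prop where
  eq_inl : ∀ g₁ g₂ h, g₁ ≠ g₂ → C s((g₁, h), (g₂, h)) = Sum.inl (A s(g₁, g₂))
  eq_inr : ∀ g₁ g₂ h₁ h₂, h₁ ≠ h₂ → C s((g₁, h₁), (g₂, h₂)) = Sum.inr (B s(h₁, h₂))

namespace IsProductColouring

variable {V W α β : Type*} {A : Sym2 V → α} {B : Sym2 W → β} {C : Sym2 (V × W) → α ⊕ β}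

theorem snd_eq_of_eq_inl (hC : IsProductColouring A B C) {x y : V × W} (hxy : x ≠ y) {a : α}
    (h : C s(x, y) = .inl a) : x.2 = y.2 ∧ A s(x.1, y.1) = a := by
  obtain ⟨g₁, h₁⟩ := x
  obtain ⟨g₂, h₂⟩ := y
  obtain rfl : h₁ = h₂ := by
    by_contra hne
    rw [hC.eq_inr _ _ _ _ hne] at h
    exact Sum.inr_ne_inl h
  rw [hC.eq_inl _ _ _ fun hg ↦ hxy (by rw [hg])] at h
  exact ⟨rfl, Sum.inl_injective h⟩

theorem snd_ne_of_eq_inr (hC : IsProductColouring A B C) {x y : V × W} (hxy : x ≠ y) {b : β}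
    (h : C s(x, y) = .inr b) : x.2 ≠ y.2 ∧ B s(x.2, y.2) = b := by
  obtain ⟨g₁, h₁⟩ := x
  obtain ⟨g₂, h₂⟩ := y
  have hne : h₁ ≠ h₂ := by
    rintro rfl
    rw [hC.eq_inl _ _ _ fun hg ↦ hxy (by rw [hg])] at h
    exact Sum.inl_ne_inr h
  rw [hC.eq_inr _ _ _ _ hne] at h
  exact ⟨hne, Sum.inr_injective h⟩

theorem exists_isCycle_of_forall_eq_inl (hC : IsProductColouring A B C) {v : V × W}
    (w : (⊤ : SimpleGraph (V × W)).Walk v v) (hw : w.IsCycle) {a : α}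
    (hwa : ∀ e ∈ w.edges, C e = .inl a) :
    ∃ c : (⊤ : SimpleGraph V).Walk v.1 v.1,
      c.IsCycle ∧ c.length = w.length ∧ ∀ e ∈ c.edges, A e = a := by
  have hedge x y (he : s(x, y) ∈ w.edges) : x.2 = y.2 ∧ A s(x.1, y.1) = a :=
    hC.snd_eq_of_eq_inl (w.adj_of_mem_edges he).ne (hwa _ he)
  obtain ⟨c, hsupp, hedges⟩ := w.exists_map_of_forall_adj (H := ⊤) Prod.fst fun x y he ↦
    fun h ↦ (w.adj_of_mem_edges he).ne (Prod.ext h (hedge x y he).1)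
  have hlayer := w.apply_eq_of_forall_mem_edges Prod.snd fun x y he ↦ (hedge x y he).1
  refine ⟨c, ?_, by simpa using congrArg List.length hedges, ?_⟩
  · -- `w` lies in the layer `V × {v.2}`, so it is the image of `c` under `g ↦ (g, v.2)`
    refine hw.of_map_support_eq (f := ⟨fun g ↦ (g, v.2), fun h ↦ by simpa using h⟩) ?_
    rw [hsupp, List.map_map]
    conv_rhs => rw [← List.map_id w.support]
    exact List.map_congr_left fun z hz ↦ Prod.ext rfl (hlayer z hz).symm
  · intro e he
    rw [hedges, List.mem_map] at he
    obtain ⟨e, he, rfl⟩ := he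
    induction e using Sym2.ind with
    | _ x y => exact (hedge x y he).2

theorem exists_walk_of_forall_eq_inr (hC : IsProductColouring A B C) {u v : V × W}
    (w : (⊤ : SimpleGraph (V × W)).Walk u v) {b : β} (hwb : ∀ e ∈ w.edges, C e = .inr b) :
    ∃ q : (⊤ : SimpleGraph W).Walk u.2 v.2, q.length = w.length ∧ ∀ e ∈ q.edges, B e = b := by
  have hedge x y (he : s(x, y) ∈ w.edges) : x.2 ≠ y.2 ∧ B s(x.2, y.2) = b :=
    hC.snd_ne_of_eq_inr (w.adj_of_mem_edges he).ne (hwb _ he)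
  obtain ⟨q, -, hedges⟩ := w.exists_map_of_forall_adj (H := ⊤) Prod.snd fun x y he ↦
    (hedge x y he).1
  refine ⟨q, by simpa using congrArg List.length hedges, fun e he ↦ ?_⟩
  rw [hedges, List.mem_map] at he
  obtain ⟨e, he, rfl⟩ := he
  induction e using Sym2.ind with
  | _ x y => exact (hedge x y he).2

end IsProductColouring

/-- If `A` is a `C_r`-free colouring of `K_m` (`r` odd) and `B` is a colouring of
`K_n` (in disjoint colours, modelled by the sum type `α ⊕ β`) in which every
monochromatic odd cycle has length strictly greater than `r`, then the product
colouring `A * B` of `K_m × K_n` (edges within a copy of `K_m` coloured by `A`,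
all edges whose second coordinates differ coloured by `B`) is `C_r`-free. -/
theorem stmt11 (r m n : ℕ) (hr : Odd r) {α β : Type*}
    (A : Sym2 (Fin m) → α) (B : Sym2 (Fin n) → β)
    (hA : ¬∃ (v : Fin m) (w : (⊤ : SimpleGraph (Fin m)).Walk v v),
      w.IsCycle ∧ w.length = r ∧ ∃ c, ∀ e ∈ w.edges, A e = c)
    (hB : ∀ (v : Fin n) (w : (⊤ : SimpleGraph (Fin n)).Walk v v),
      w.IsCycle → Odd w.length → (∃ c, ∀ e ∈ w.edges, B e = c) → r < w.length)
    (C : Sym2 (Fin m × Fin n) → α ⊕ β)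
    (h1 : ∀ g₁ g₂ h, g₁ ≠ g₂ → C s((g₁, h), (g₂, h)) = Sum.inl (A s(g₁, g₂)))
    (h2 : ∀ g₁ g₂ h₁ h₂, h₁ ≠ h₂ → C s((g₁, h₁), (g₂, h₂)) = Sum.inr (B s(h₁, h₂))) :
    ¬∃ (v : Fin m × Fin n) (w : (⊤ : SimpleGraph (Fin m × Fin n)).Walk v v),
      w.IsCycle ∧ w.length = r ∧ ∃ c, ∀ e ∈ w.edges, C e = c := by
  rintro ⟨v, w, hw, rfl, c, hwc⟩
  have hC : IsProductColouring A B C := ⟨h1, h2⟩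
  cases c with
  | inl a =>
    obtain ⟨c, hc, hlen, hca⟩ := hC.exists_isCycle_of_forall_eq_inl w hw hwc
    exact hA ⟨_, c, hc, hlen, a, hca⟩
  | inr b =>
    obtain ⟨q, hlen, hqb⟩ := hC.exists_walk_of_forall_eq_inr w hwc
    obtain ⟨u, c, hc, hodd, hle, hsub⟩ := q.exists_odd_isCycle_of_odd_length (hlen ▸ hr)
    have := hB u c hc hodd ⟨b, fun e he ↦ hqb e (hsub he)⟩
    omega
end

section
/- Suppose for some odd r and some integer f there exists an f-colouring of K_{2^f+1} with all monochromatic odd cycles of length strictly greater than r, and for integers c with 0 ≤ c < f there exists a (c+1)-colouring of K_{(r-1)2^c} with no monochromatic C_r. Then for every k ≥ 1, writing k - 1 = m f + c with 0 ≤ c < f, there exists a k-colouring of the complete graph on (r-1)·2^c·(2^f+1)^m vertices with no monochromatic cycle of length r. -/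
/-!
Write `C * D` for the colouring of the blow-up of `D` in which every vertex is replaced by a copy of
`C`. A monochromatic `r`-cycle of `C * D` in a colour of `C` cannot leave the copy it starts in,
so it is a monochromatic `r`-cycle of `C`. One in a colour of `D` projects to a monochromatic
closed walk of odd length `r` in `D`, and every odd closed walk contains an odd cycle no longer than
itself, which `D` forbids. Hence `C * D` is `C_r`-free, and iterating `B ↦ B * A` starting from the
given `(c + 1)`-colourings produces the required colourings; the vertex and colour counts are
`|B| · (2^f + 1)` and `k + f` at each step.
-/

open SimpleGraph

namespace SimpleGraph.Walk

variable {V : Type*} {G : SimpleGraph V}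

lemma IsPath.isCycle_cons {u v : V} {p : G.Walk v u} (hp : p.IsPath) (h : G.Adj u v)
    (hl : 2 ≤ p.length) : (cons h p).IsCycle :=
  isCycle_iff_isPath_tail_and_le_length.mpr ⟨by simpa using hp, by simp; omega⟩

lemma exists_odd_isCycle_or_isPath_of_parity [DecidableEq V] {u v : V} (p : G.Walk u v) :
    (∃ (x : V) (c : G.Walk x x), c.IsCycle ∧ Odd c.length ∧ c.length ≤ p.length) ∨
      ∃ q : G.Walk u v, q.IsPath ∧ q.length ≤ p.length ∧ q.length % 2 = p.length % 2 := by
  induction p with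
  | nil => exact .inr ⟨nil, .nil, le_rfl, rfl⟩
  | @cons u a v h p ih =>
    rcases ih with ⟨x, c, hc, hodd, hle⟩ | ⟨q, hq, hle, hpar⟩
    · exact .inl ⟨x, c, hc, hodd, by simp; omega⟩
    by_cases hu : u ∈ q.support
    swap
    · exact .inr ⟨cons h q, hq.cons hu, by simp; omega, by simp; omega⟩
    have hsplit := congrArg length (q.take_spec hu)
    rw [length_append] at hsplit
    have htake : (q.takeUntil u hu).length ≠ 0 := fun h0 ↦
      h.ne ((q.takeUntil u hu).eq_of_length_eq_zero h0).symm
    -- `u` recurs on `q`: `h` closes `q.takeUntil u` into a cycle, which is odd unless the rest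
    -- `q.dropUntil u` is a shorter path of the same parity as `p`.
    rcases Nat.even_or_odd (q.takeUntil u hu).length with heven | hodd
    · refine .inl ⟨u, cons h (q.takeUntil u hu), (hq.takeUntil hu).isCycle_cons h ?_, ?_, ?_⟩
      · rcases heven with ⟨t, ht⟩; omega
      · simpa [Nat.odd_add_one] using heven
      · simp; omega
    · refine .inr ⟨q.dropUntil u hu, hq.dropUntil hu, by simp; omega, ?_⟩
      rcases hodd with ⟨t, ht⟩
      simp; omega

lemma exists_odd_isCycle_of_odd_length_s13 {v : V} (p : G.Walk v v) (hp : Odd p.length) :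
    ∃ (x : V) (c : G.Walk x x), c.IsCycle ∧ Odd c.length ∧ c.length ≤ p.length := by
  classical
  refine (p.exists_odd_isCycle_or_isPath_of_parity).resolve_right ?_
  rintro ⟨q, hq, -, hpar⟩
  rw [length_eq_zero_iff.mpr (isPath_iff_nil.mp hq)] at hpar
  exact Nat.not_even_iff_odd.mpr hp (Nat.even_iff.mpr hpar.symm)

lemma apply_eq_of_mem_support {X : Type*} (g : V → X) (hg : ∀ ⦃x y⦄, G.Adj x y → g x = g y)
    {u v : V} (p : G.Walk u v) {x : V} (hx : x ∈ p.support) : g x = g u := by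
  induction p with
  | nil => simp_all
  | cons h p ih =>
    rw [support_cons, List.mem_cons] at hx
    rcases hx with rfl | hx
    · rfl
    · exact (ih hx).trans (hg h).symm

lemma length_induce (s : Set V) {u v : V} (p : G.Walk u v) (hp : ∀ x ∈ p.support, x ∈ s) :
    (p.induce s hp).length = p.length := by
  induction p <;> simp [*]

lemma IsCycle.induce {s : Set V} {v : V} {p : G.Walk v v} (hc : p.IsCycle)
    (hp : ∀ x ∈ p.support, x ∈ s) : (p.induce s hp).IsCycle :=
  IsCycle.of_map (f := (Embedding.induce s).toHom) (by rwa [map_induce])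

end SimpleGraph.Walk

variable {V W α β K L : Type*}

def colourClass (C : Sym2 V → K) (i : K) : SimpleGraph V :=
  SimpleGraph.fromEdgeSet (C ⁻¹' {i})

@[simp]
lemma colourClass_adj {C : Sym2 V → K} {i : K} {x y : V} :
    (colourClass C i).Adj x y ↔ C s(x, y) = i ∧ x ≠ y :=
  fromEdgeSet_adj _

lemma exists_mono_cycle_iff (C : Sym2 V → K) (P : ℕ → Prop) :
    (∃ (v : V) (w : (⊤ : SimpleGraph V).Walk v v),
        w.IsCycle ∧ P w.length ∧ ∃ i, ∀ e ∈ w.edges, C e = i) ↔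
      ∃ (i : K) (v : V) (w : (colourClass C i).Walk v v), w.IsCycle ∧ P w.length := by
  constructor
  · rintro ⟨v, w, hw, hP, i, hi⟩
    have hsub : ∀ e ∈ w.edges, e ∈ (colourClass C i).edgeSet := by
      intro e he
      simp only [colourClass, edgeSet_fromEdgeSet]
      exact ⟨hi e he, by simpa using w.edges_subset_edgeSet he⟩
    exact ⟨i, v, w.transfer _ hsub, hw.transfer hsub, by rwa [Walk.length_transfer]⟩
  · rintro ⟨i, v, w, hw, hP⟩
    have hmem : ∀ e ∈ w.edges, C e = i ∧ e ∉ Sym2.diagSet := fun e he ↦ by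
      simpa only [colourClass, edgeSet_fromEdgeSet, Set.mem_sdiff, Set.mem_preimage,
        Set.mem_singleton_iff] using w.edges_subset_edgeSet he
    have hsub : ∀ e ∈ w.edges, e ∈ (⊤ : SimpleGraph V).edgeSet := fun e he ↦ by
      simpa using (hmem e he).2
    refine ⟨v, w.transfer ⊤ hsub, hw.transfer hsub, by rwa [Walk.length_transfer], i,
      fun e he ↦ (hmem e (by rwa [Walk.edges_transfer] at he)).1⟩

def MonoCycleFree (r : ℕ) (C : Sym2 V → K) : Prop :=
  ∀ (i : K) (v : V) (w : (colourClass C i).Walk v v), w.IsCycle → w.length ≠ r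

lemma monoCycleFree_iff {r : ℕ} {C : Sym2 V → K} :
    MonoCycleFree r C ↔ ¬∃ (v : V) (w : (⊤ : SimpleGraph V).Walk v v),
      w.IsCycle ∧ w.length = r ∧ ∃ i, ∀ e ∈ w.edges, C e = i := by
  rw [exists_mono_cycle_iff C (· = r)]
  simp [MonoCycleFree]

lemma MonoCycleFree.relabel {r : ℕ} {C : Sym2 V → K} (hC : MonoCycleFree r C) (e : V ≃ W)
    (g : K ≃ L) : MonoCycleFree r (fun s ↦ g (C (s.map e.symm))) := by
  intro i v w hw hlen
  let φ : colourClass (fun s ↦ g (C (s.map e.symm))) i →g colourClass C (g.symm i) :=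
    ⟨e.symm, fun h ↦ by simpa [Equiv.eq_symm_apply] using h⟩
  exact hC _ _ (w.map φ) (hw.map e.symm.injective) (by simpa using hlen)

/-- The paper's `C * D`: the vertex `(a, b)` is vertex `a` of the copy of `C` placed at vertex `b`
of `D`; edges inside a copy keep their `C`-colour and all other edges get the `D`-colour of their
projection. -/
def productColouring [DecidableEq β] (C : Sym2 α → K) (D : Sym2 β → L) : Sym2 (α × β) → K ⊕ L :=
  fun e ↦ if (e.map Prod.snd).IsDiag then .inl (C (e.map Prod.fst)) else .inr (D (e.map Prod.snd))

section

variable [DecidableEq β] {C : Sym2 α → K} {D : Sym2 β → L}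

lemma productColouring_mk (x y : α × β) :
    productColouring C D s(x, y) =
      if x.2 = y.2 then .inl (C s(x.1, y.1)) else .inr (D s(x.2, y.2)) := by
  simp [productColouring]

lemma colourClass_productColouring_inl_adj {i : K} {x y : α × β} :
    (colourClass (productColouring C D) (.inl i)).Adj x y ↔
      x.2 = y.2 ∧ (colourClass C i).Adj x.1 y.1 := by
  rw [colourClass_adj, colourClass_adj, productColouring_mk]
  split_ifs with h <;> simp [h, Prod.ext_iff]

lemma colourClass_productColouring_inr_adj {j : L} {x y : α × β} :
    (colourClass (productColouring C D) (.inr j)).Adj x y ↔ (colourClass D j).Adj x.2 y.2 := by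
  rw [colourClass_adj, colourClass_adj, productColouring_mk]
  split_ifs with h <;> simp [h, Prod.ext_iff]

namespace productColouring

def fibreHom (i : K) (b : β) :
    (colourClass (productColouring C D) (.inl i)).induce {x | x.2 = b} →g colourClass C i where
  toFun x := x.1.1
  map_rel' h := (colourClass_productColouring_inl_adj.mp (induce_adj.mp h)).2

lemma fibreHom_injective (i : K) (b : β) : Function.Injective (fibreHom (C := C) (D := D) i b) :=
  fun x y h ↦ Subtype.ext (Prod.ext h (x.2.trans y.2.symm))

def outerHom (j : L) : colourClass (productColouring C D) (.inr j) →g colourClass D j where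
  toFun := Prod.snd
  map_rel' h := colourClass_productColouring_inr_adj.mp h

end productColouring

open productColouring in
theorem MonoCycleFree.productColouring {r : ℕ} (hr : Odd r) (hC : MonoCycleFree r C)
    (hD : ∀ (j : L) (v : β) (w : (colourClass D j).Walk v v), w.IsCycle → Odd w.length →
      r < w.length) :
    MonoCycleFree r (productColouring C D) := by
  rintro (i | j) v w hw rfl
  · have hfibre : ∀ x ∈ w.support, x ∈ {x : α × β | x.2 = v.2} := fun x hx ↦
      w.apply_eq_of_mem_support Prod.snd
        (fun _ _ h ↦ (colourClass_productColouring_inl_adj.mp h).1) hx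
    exact hC i _ ((w.induce _ hfibre).map (fibreHom i v.2))
      ((hw.induce hfibre).map (fibreHom_injective i v.2)) (by simp [Walk.length_induce])
  · obtain ⟨x, c, hc, hodd, hle⟩ := (w.map (outerHom j)).exists_odd_isCycle_of_odd_length_s13
      (by simpa using hr)
    have := hD j x c hc hodd
    simp only [Walk.length_map] at hle
    omega

end

theorem exists_monoCycleFree_iterate {r a f N k : ℕ} (hr : Odd r) (A : Sym2 (Fin a) → Fin f)
    (hA : ∀ (j : Fin f) (v : Fin a) (w : (colourClass A j).Walk v v), w.IsCycle →
      Odd w.length → r < w.length)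
    (B : Sym2 (Fin N) → Fin k) (hB : MonoCycleFree r B) (m : ℕ) :
    ∃ C : Sym2 (Fin (N * a ^ m)) → Fin (k + m * f), MonoCycleFree r C := by
  induction m with
  | zero => exact ⟨_, hB.relabel (finCongr (by simp)) (finCongr (by simp))⟩
  | succ m ih =>
    obtain ⟨C, hC⟩ := ih
    exact ⟨_, (hC.productColouring hr hA).relabel (finProdFinEquiv.trans (finCongr (by ring)))
      (finSumFinEquiv.trans (finCongr (by ring)))⟩

/-- Given an `f`-colouring of `K_{2^f+1}` with all monochromatic odd cycles of
length `> r` (`r` odd), and for each `c < f` a `C_r`-free `(c+1)`-colouring of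
`K_{(r-1)·2^c}`, then for every `k ≥ 1`, writing `k - 1 = m·f + c` with `c < f`,
there is a `C_r`-free `k`-colouring of the complete graph on
`(r-1)·2^c·(2^f+1)^m` vertices. -/
theorem stmt13 (r f : ℕ) (hr : Odd r)
    (hA : ∃ A : Sym2 (Fin (2 ^ f + 1)) → Fin f,
      ∀ (v : Fin (2 ^ f + 1)) (w : (⊤ : SimpleGraph (Fin (2 ^ f + 1))).Walk v v),
        w.IsCycle → Odd w.length → (∃ c, ∀ e ∈ w.edges, A e = c) → r < w.length)
    (hB : ∀ c : ℕ, c < f →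
      ∃ B : Sym2 (Fin ((r - 1) * 2 ^ c)) → Fin (c + 1),
        ¬∃ (v : Fin ((r - 1) * 2 ^ c))
            (w : (⊤ : SimpleGraph (Fin ((r - 1) * 2 ^ c))).Walk v v),
          w.IsCycle ∧ w.length = r ∧ ∃ i, ∀ e ∈ w.edges, B e = i) :
    ∀ k m c : ℕ, 1 ≤ k → c < f → k - 1 = m * f + c →
      ∃ C : Sym2 (Fin ((r - 1) * 2 ^ c * (2 ^ f + 1) ^ m)) → Fin k,
        ¬∃ (v : Fin ((r - 1) * 2 ^ c * (2 ^ f + 1) ^ m))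
            (w : (⊤ : SimpleGraph (Fin ((r - 1) * 2 ^ c * (2 ^ f + 1) ^ m))).Walk v v),
          w.IsCycle ∧ w.length = r ∧ ∃ i, ∀ e ∈ w.edges, C e = i := by
  intro k m c hk hc hkmc
  obtain ⟨A, hA⟩ := hA
  have hA' : ∀ (j : Fin f) (v : Fin (2 ^ f + 1)) (w : (colourClass A j).Walk v v),
      w.IsCycle → Odd w.length → r < w.length := by
    by_contra! h
    obtain ⟨v, w, hw, ⟨hodd, hle⟩, i, hi⟩ :=
      (exists_mono_cycle_iff A (fun n ↦ Odd n ∧ n ≤ r)).mpr (by simpa using h)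
    exact absurd (hA v w hw hodd ⟨i, hi⟩) (not_lt.mpr hle)
  obtain ⟨B, hB⟩ := hB c hc
  obtain rfl : k = c + 1 + m * f := by omega
  obtain ⟨C, hC⟩ := exists_monoCycleFree_iterate hr A hA' B (monoCycleFree_iff.mpr hB) m
  exact ⟨C, monoCycleFree_iff.mp hC⟩
end
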